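/- Consider the linear mixed model with FSN random effects, and suppose the density p is upper bounded: there is K > 0 with p(w|λ) ≤ K for all w ∈ [0,1] and λ ∈ Λ. Then the marginal likelihood satisfies m(y) ≤ K^q · m_N(y), where m_N(y) is the marginal likelihood of the same model with standard normal random effects u_{ik} | σ_i ~ N(0, σ_i²) and prior σ_0^{−(2a_0+1)} e^{−b_0/σ_0²} ∏_{i=1}^r σ_i^{−(2a_i+1)} e^{−b_i/σ_i²}. -/
import Mathlib


open MeasureTheory Real Set Matrix
open scoped ENNReal

noncomputable def stdNormalPDF (x : ℝ) : ℝ :=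
  (Real.sqrt (2 * Real.pi))⁻¹ * Real.exp (-(x ^ 2) / 2)

noncomputable def stdNormalCDF (x : ℝ) : ℝ :=
  ∫ t in Set.Iic x, stdNormalPDF t

/-- The Ferreira–Steel density `s(u | 0, σ, λ) = (1/σ) p(Φ(u/σ) | λ) φ(u/σ)`. -/
noncomputable def fsnPDF (pdens : ℝ → ℝ → ℝ) (σ lam u : ℝ) : ℝ :=
  (1 / σ) * pdens (stdNormalCDF (u / σ)) lam * stdNormalPDF (u / σ)

noncomputable def fsnMarginal {n p r : ℕ} {qs : Fin r → ℕ}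
    (X : Matrix (Fin n) (Fin p) ℝ) (Z : Matrix (Fin n) ((i : Fin r) × Fin (qs i)) ℝ)
    (pdens : ℝ → ℝ → ℝ) (Λset : Set ℝ) (πs : Fin r → ℝ → ℝ)
    (a0 b0 : ℝ) (av bv : Fin r → ℝ) (y : Fin n → ℝ) : ℝ≥0∞ :=
  ∫⁻ lam in {l : Fin r → ℝ | ∀ i, l i ∈ Λset},
    ∫⁻ σ in {s : Fin r → ℝ | ∀ i, 0 < s i},
      ∫⁻ σ0 in Set.Ioi (0 : ℝ),
        ∫⁻ β : Fin p → ℝ,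
          ∫⁻ u : ((i : Fin r) × Fin (qs i)) → ℝ,
            ENNReal.ofReal (
              (2 * Real.pi * σ0 ^ 2) ^ (-(n : ℝ) / 2) *
                Real.exp (-(∑ j, (y j - (X.mulVec β + Z.mulVec u) j) ^ 2) / (2 * σ0 ^ 2)) *
                (∏ ik : (i : Fin r) × Fin (qs i), fsnPDF pdens (σ ik.1) (lam ik.1) (u ik)) *
                σ0 ^ (-(2 * a0 + 1)) * Real.exp (-b0 / σ0 ^ 2) *
                ∏ i, (πs i (lam i) * (σ i) ^ (-(2 * av i + 1)) * Real.exp (-(bv i) / (σ i) ^ 2)))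

/-- Marginal likelihood of the linear mixed model with independent normal random effects
`u_{ik} | σ_i ~ N(0, σ_i²)` and prior
`σ₀^{-(2a₀+1)} e^{-b₀/σ₀²} ∏ᵢ σᵢ^{-(2aᵢ+1)} e^{-bᵢ/σᵢ²}`. -/
noncomputable def normalMarginal {n p r : ℕ} {qs : Fin r → ℕ}
    (X : Matrix (Fin n) (Fin p) ℝ) (Z : Matrix (Fin n) ((i : Fin r) × Fin (qs i)) ℝ)
    (a0 b0 : ℝ) (av bv : Fin r → ℝ) (y : Fin n → ℝ) : ℝ≥0∞ :=
  ∫⁻ σ in {s : Fin r → ℝ | ∀ i, 0 < s i},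
    ∫⁻ σ0 in Set.Ioi (0 : ℝ),
      ∫⁻ β : Fin p → ℝ,
        ∫⁻ u : ((i : Fin r) × Fin (qs i)) → ℝ,
          ENNReal.ofReal (
            (2 * Real.pi * σ0 ^ 2) ^ (-(n : ℝ) / 2) *
              Real.exp (-(∑ j, (y j - (X.mulVec β + Z.mulVec u) j) ^ 2) / (2 * σ0 ^ 2)) *
              (∏ ik : (i : Fin r) × Fin (qs i),
                (2 * Real.pi * (σ ik.1) ^ 2) ^ (-(1 : ℝ) / 2) *
                  Real.exp (-(u ik) ^ 2 / (2 * (σ ik.1) ^ 2))) *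
              σ0 ^ (-(2 * a0 + 1)) * Real.exp (-b0 / σ0 ^ 2) *
              ∏ i, ((σ i) ^ (-(2 * av i + 1)) * Real.exp (-(bv i) / (σ i) ^ 2)))

section AuxLemmas

lemma stdNormalPDF_nonneg (x : ℝ) : 0 ≤ stdNormalPDF x := by
  unfold stdNormalPDF; positivity

lemma stdNormalPDF_eq (x : ℝ) :
    stdNormalPDF x = (Real.sqrt (2 * Real.pi))⁻¹ * Real.exp (-(1/2) * x ^ 2) := by
  unfold stdNormalPDF; ring_nf

lemma integrable_stdNormalPDF : Integrable stdNormalPDF := by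
  rw [show stdNormalPDF = fun x => (Real.sqrt (2 * Real.pi))⁻¹ * Real.exp (-(1/2) * x ^ 2) from
    funext stdNormalPDF_eq]
  exact (integrable_exp_neg_mul_sq (by norm_num : (0:ℝ) < 1/2)).const_mul _

lemma integral_stdNormalPDF : ∫ x, stdNormalPDF x = 1 := by
  simp_rw [stdNormalPDF_eq]
  rw [MeasureTheory.integral_const_mul, integral_gaussian]
  have h : Real.sqrt (π / (1/2)) = Real.sqrt (2 * π) := by norm_num [mul_comm]
  rw [h, inv_mul_cancel₀ (by positivity)]

lemma stdNormalCDF_mem_Icc (x : ℝ) : stdNormalCDF x ∈ Set.Icc (0:ℝ) 1 := by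
  constructor
  · exact setIntegral_nonneg measurableSet_Iic fun t _ => stdNormalPDF_nonneg t
  · rw [← integral_stdNormalPDF]
    exact setIntegral_le_integral integrable_stdNormalPDF
      (Filter.Eventually.of_forall stdNormalPDF_nonneg)

lemma fsnPDF_nonneg {pdens : ℝ → ℝ → ℝ} {σ lam : ℝ} (hσ : 0 < σ)
    (hnn : ∀ w ∈ Set.Icc (0:ℝ) 1, 0 ≤ pdens w lam) (u : ℝ) :
    0 ≤ fsnPDF pdens σ lam u := by
  unfold fsnPDF
  have h1 := hnn _ (stdNormalCDF_mem_Icc (u / σ))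
  have h2 := stdNormalPDF_nonneg (u / σ)
  positivity

lemma fsnPDF_le {pdens : ℝ → ℝ → ℝ} {σ lam K : ℝ} (hσ : 0 < σ)
    (hbd : ∀ w ∈ Set.Icc (0:ℝ) 1, pdens w lam ≤ K) (u : ℝ) :
    fsnPDF pdens σ lam u ≤
      K * ((2 * Real.pi * σ ^ 2) ^ (-(1:ℝ) / 2) * Real.exp (-u ^ 2 / (2 * σ ^ 2))) := by
  have hrpow : (2 * Real.pi * σ ^ 2) ^ (-(1:ℝ) / 2) = (Real.sqrt (2 * Real.pi) * σ)⁻¹ := by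
    have hb : (0:ℝ) < 2 * Real.pi * σ ^ 2 := by positivity
    rw [show (-(1:ℝ) / 2) = -(1/2) by ring, Real.rpow_neg hb.le, ← Real.sqrt_eq_rpow,
      Real.sqrt_mul (by positivity) (σ ^ 2), Real.sqrt_sq hσ.le]
  have hexp : Real.exp (-(u / σ) ^ 2 / 2) = Real.exp (-u ^ 2 / (2 * σ ^ 2)) := by
    congr 1
    rw [div_pow]
    rw [neg_div, neg_div, div_div, mul_comm (σ^2) 2]
  have hle : fsnPDF pdens σ lam u ≤ (1 / σ) * K * stdNormalPDF (u / σ) := by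
    unfold fsnPDF
    refine mul_le_mul_of_nonneg_right ?_ (stdNormalPDF_nonneg _)
    exact mul_le_mul_of_nonneg_left (hbd _ (stdNormalCDF_mem_Icc _)) (by positivity)
  refine hle.trans (le_of_eq ?_)
  unfold stdNormalPDF
  rw [hrpow, hexp, mul_inv]
  ring

lemma lintegral_le_of_forall_mem_le {α : Type*} [MeasurableSpace α] {μ : Measure α}
    {s : Set α} {f g g' : α → ℝ≥0∞} (hfg : ∀ x ∈ s, f x ≤ g x) (hg' : Measurable g')
    (hgg' : g =ᵐ[μ.restrict s] g') :
    ∫⁻ x in s, f x ∂μ ≤ ∫⁻ x in s, g' x ∂μ := by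
  rw [lintegral_def]
  refine iSup₂_le fun φ hφ => ?_
  rw [← φ.lintegral_eq_lintegral (μ.restrict s)]
  refine lintegral_mono_ae (ae_iff.mpr ?_)
  have hset : {x | ¬ φ x ≤ g' x} = {x | g' x < φ x} := by
    ext x; simp [not_le]
  have hmeas : MeasurableSet {x | g' x < φ x} := measurableSet_lt hg' φ.measurable
  have hsub : {x | g' x < φ x} ∩ s ⊆ {x | g x ≠ g' x} := by
    rintro x ⟨hx1, hx2⟩
    simp only [Set.mem_setOf_eq] at hx1 ⊢
    intro h
    exact absurd (lt_of_lt_of_le hx1 ((hφ x).trans (hfg x hx2))) (by rw [h]; exact lt_irrefl _)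
  rw [hset]
  refine le_zero_iff.mp ?_
  have h1 : μ (({x | g' x < φ x} ∩ s) ∩ s) ≤ (μ.restrict s) ({x | g' x < φ x} ∩ s) :=
    Measure.le_restrict_apply _ _
  rw [Set.inter_assoc, Set.inter_self] at h1
  calc (μ.restrict s) {x | g' x < φ x}
      = μ ({x | g' x < φ x} ∩ s) := Measure.restrict_apply hmeas
    _ ≤ (μ.restrict s) ({x | g' x < φ x} ∩ s) := h1
    _ ≤ (μ.restrict s) {x | g x ≠ g' x} := measure_mono hsub
    _ ≤ 0 := le_of_eq (ae_iff.mp hgg')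

lemma ae_nonneg_restrict_of_forall_mem {α : Type*} [MeasurableSpace α] {μ : Measure α}
    {s : Set α} {f : α → ℝ} (hf : ∀ x ∈ s, 0 ≤ f x)
    (hm : AEStronglyMeasurable f (μ.restrict s)) :
    0 ≤ᵐ[μ.restrict s] f := by
  set ν := μ.restrict s with hν
  set g := hm.mk f with hg
  have hae : f =ᵐ[ν] g := hm.ae_eq_mk
  have hgm : Measurable g := hm.stronglyMeasurable_mk.measurable
  have hne : ν {x | f x ≠ g x} = 0 := ae_iff.mp hae
  have hsub1 : {x | g x < 0} ∩ s ⊆ {x | f x ≠ g x} := by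
    rintro x ⟨hx1, hx2⟩
    simp only [Set.mem_setOf_eq] at hx1 ⊢
    intro h
    exact absurd (h ▸ hf x hx2) (not_le.mpr hx1)
  have h2 : ν {x | g x < 0} = 0 := by
    refine le_zero_iff.mp ?_
    have h1 : μ (({x | g x < 0} ∩ s) ∩ s) ≤ ν ({x | g x < 0} ∩ s) :=
      Measure.le_restrict_apply _ _
    rw [Set.inter_assoc, Set.inter_self] at h1
    calc ν {x | g x < 0}
        = μ ({x | g x < 0} ∩ s) := Measure.restrict_apply (measurableSet_lt hgm measurable_const)
      _ ≤ ν ({x | g x < 0} ∩ s) := h1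
      _ ≤ ν {x | f x ≠ g x} := measure_mono hsub1
      _ = 0 := hne
  refine ae_iff.mpr (le_zero_iff.mp ?_)
  have hsub2 : {x | ¬ 0 ≤ f x} ⊆ {x | g x < 0} ∪ {x | f x ≠ g x} := by
    intro x hx
    simp only [Set.mem_setOf_eq, not_le] at hx
    by_cases h : f x = g x
    · exact Or.inl (by simp only [Set.mem_setOf_eq, ← h]; exact hx)
    · exact Or.inr h
  calc ν {x | ¬ 0 ≤ f x} ≤ ν ({x | g x < 0} ∪ {x | f x ≠ g x}) := measure_mono hsub2
    _ ≤ ν {x | g x < 0} + ν {x | f x ≠ g x} := measure_union_le _ _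
    _ = 0 := by rw [h2, hne, add_zero]

lemma lintegral_pi_prod : ∀ (n : ℕ) (μ1 : Measure ℝ), SigmaFinite μ1 →
    ∀ (f : Fin n → ℝ → ℝ≥0∞), (∀ i, Measurable (f i)) →
    (∫⁻ x : Fin n → ℝ, ∏ i, f i (x i) ∂(Measure.pi fun _ => μ1)) = ∏ i, ∫⁻ t, f i t ∂μ1 := by
  intro n
  induction n with
  | zero =>
    intro μ1 _ f _
    simp only [Finset.univ_eq_empty, Finset.prod_empty, lintegral_one]
    rw [Measure.pi_univ]
    simp
  | succ n ih =>
    intro μ1 hsf f hf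
    haveI := hsf
    have hmp := measurePreserving_piFinSuccAbove (fun _ : Fin (n+1) => μ1) 0
    set e := MeasurableEquiv.piFinSuccAbove (fun _ : Fin (n+1) => ℝ) 0 with he
    have key := hmp.lintegral_map_equiv
      (fun y : ℝ × (Fin n → ℝ) => f 0 y.1 * ∏ j : Fin n, f (Fin.succ j) (y.2 j)) e
    have hcomp : ∀ x : Fin (n+1) → ℝ,
        f 0 (e x).1 * ∏ j : Fin n, f (Fin.succ j) ((e x).2 j) = ∏ i, f i (x i) := by
      intro x
      rw [Fin.prod_univ_succ]
      simp [he, MeasurableEquiv.piFinSuccAbove_apply, Fin.zero_succAbove, Fin.tail]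
    calc (∫⁻ x : Fin (n+1) → ℝ, ∏ i, f i (x i) ∂(Measure.pi fun _ => μ1))
        = ∫⁻ y : ℝ × (Fin n → ℝ), f 0 y.1 * ∏ j : Fin n, f (Fin.succ j) (y.2 j)
            ∂(μ1.prod (Measure.pi fun _ => μ1)) := by
          rw [key]; exact lintegral_congr fun x => (hcomp x).symm
      _ = (∫⁻ t, f 0 t ∂μ1) * ∫⁻ v : Fin n → ℝ, ∏ j, f (Fin.succ j) (v j)
            ∂(Measure.pi fun _ => μ1) := by
          exact lintegral_prod_mul (hf 0).aemeasurable
            (Finset.measurable_prod Finset.univ fun (j : Fin n) (_ : j ∈ Finset.univ) =>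
              (hf j.succ).comp (measurable_pi_apply j)).aemeasurable
      _ = ∏ i, ∫⁻ t, f i t ∂μ1 := by
          rw [ih μ1 hsf (fun j => f (Fin.succ j)) (fun (j : Fin n) => hf j.succ),
            Fin.prod_univ_succ]

lemma restrict_pi_of_measurable {r : ℕ} (T : Set ℝ) (_hT : MeasurableSet T) :
    (volume : Measure (Fin r → ℝ)).restrict (Set.pi Set.univ fun _ => T)
      = Measure.pi fun _ => (volume : Measure ℝ).restrict T := by
  refine (Measure.pi_eq fun s hs => ?_).symm
  rw [Measure.restrict_apply (MeasurableSet.univ_pi hs), ← Set.pi_inter_distrib]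
  rw [volume_pi, Measure.pi_pi]
  exact Finset.prod_congr rfl fun i _ => (Measure.restrict_apply (hs i)).symm

lemma core_real_bound {r : ℕ} {qs : Fin r → ℕ} (pdens : ℝ → ℝ → ℝ) (Λset : Set ℝ)
    (πs : Fin r → ℝ → ℝ) (K : ℝ)
    (hpdens : ∀ lam ∈ Λset, (∀ w ∈ Set.Icc (0 : ℝ) 1, 0 ≤ pdens w lam))
    (hbdd : ∀ w ∈ Set.Icc (0 : ℝ) 1, ∀ lam ∈ Λset, pdens w lam ≤ K)
    (hπnonneg : ∀ i, ∀ lam ∈ Λset, 0 ≤ πs i lam)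
    (lam σ : Fin r → ℝ) (hlam : ∀ i, lam i ∈ Λset) (hσ : ∀ i, 0 < σ i)
    (u : ((i : Fin r) × Fin (qs i)) → ℝ) (A1 A2 A3 A4 : ℝ)
    (hA1 : 0 ≤ A1) (hA2 : 0 ≤ A2) (hA3 : 0 ≤ A3) (hA4 : 0 ≤ A4)
    (Y Z : Fin r → ℝ) (hY : ∀ i, 0 ≤ Y i) (hZ : ∀ i, 0 ≤ Z i) :
    A1 * A2 * (∏ ik : (i : Fin r) × Fin (qs i), fsnPDF pdens (σ ik.1) (lam ik.1) (u ik)) *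
        A3 * A4 * (∏ i, (πs i (lam i) * Y i * Z i)) ≤
      (K ^ (∑ i, qs i) * ∏ i, πs i (lam i)) *
        (A1 * A2 * (∏ ik : (i : Fin r) × Fin (qs i),
            (2 * Real.pi * (σ ik.1) ^ 2) ^ (-(1 : ℝ) / 2) *
              Real.exp (-(u ik) ^ 2 / (2 * (σ ik.1) ^ 2))) * A3 * A4 * ∏ i, (Y i * Z i)) := by
  have hP1 : (∏ ik : (i : Fin r) × Fin (qs i), fsnPDF pdens (σ ik.1) (lam ik.1) (u ik)) ≤
      K ^ (∑ i, qs i) * ∏ ik : (i : Fin r) × Fin (qs i),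
        (2 * Real.pi * (σ ik.1) ^ 2) ^ (-(1 : ℝ) / 2) *
          Real.exp (-(u ik) ^ 2 / (2 * (σ ik.1) ^ 2)) := by
    have h1 : (∏ ik : (i : Fin r) × Fin (qs i), fsnPDF pdens (σ ik.1) (lam ik.1) (u ik)) ≤
        ∏ ik : (i : Fin r) × Fin (qs i),
          K * ((2 * Real.pi * (σ ik.1) ^ 2) ^ (-(1 : ℝ) / 2) *
            Real.exp (-(u ik) ^ 2 / (2 * (σ ik.1) ^ 2))) := by
      refine Finset.prod_le_prod (fun ik _ => ?_) (fun ik _ => ?_)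
      · exact fsnPDF_nonneg (hσ ik.1) (hpdens _ (hlam ik.1)) _
      · exact fsnPDF_le (hσ ik.1) (fun w hw => hbdd w hw _ (hlam ik.1)) _
    refine h1.trans (le_of_eq ?_)
    rw [Finset.prod_mul_distrib, Finset.prod_const, Finset.card_univ, Fintype.card_sigma]
    simp only [Fintype.card_fin]
  have hPL : (∏ i, (πs i (lam i) * Y i * Z i)) =
      (∏ i, πs i (lam i)) * ∏ i, (Y i * Z i) := by
    rw [← Finset.prod_mul_distrib]
    exact Finset.prod_congr rfl fun i _ => by ring
  have hπ : 0 ≤ ∏ i, πs i (lam i) := Finset.prod_nonneg fun i _ => hπnonneg i _ (hlam i)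
  have hYZ : 0 ≤ ∏ i, (Y i * Z i) :=
    Finset.prod_nonneg fun i _ => mul_nonneg (hY i) (hZ i)
  have hM : 0 ≤ A1 * A2 * A3 * A4 * (∏ i, πs i (lam i)) * ∏ i, (Y i * Z i) :=
    mul_nonneg (mul_nonneg (mul_nonneg (mul_nonneg (mul_nonneg hA1 hA2) hA3) hA4) hπ) hYZ
  calc A1 * A2 * (∏ ik : (i : Fin r) × Fin (qs i), fsnPDF pdens (σ ik.1) (lam ik.1) (u ik)) *
        A3 * A4 * (∏ i, (πs i (lam i) * Y i * Z i))
      = (A1 * A2 * A3 * A4 * (∏ i, πs i (lam i)) * ∏ i, (Y i * Z i)) *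
        (∏ ik : (i : Fin r) × Fin (qs i), fsnPDF pdens (σ ik.1) (lam ik.1) (u ik)) := by
        rw [hPL]; ring
    _ ≤ (A1 * A2 * A3 * A4 * (∏ i, πs i (lam i)) * ∏ i, (Y i * Z i)) *
        (K ^ (∑ i, qs i) * ∏ ik : (i : Fin r) × Fin (qs i),
          (2 * Real.pi * (σ ik.1) ^ 2) ^ (-(1 : ℝ) / 2) *
            Real.exp (-(u ik) ^ 2 / (2 * (σ ik.1) ^ 2))) :=
        mul_le_mul_of_nonneg_left hP1 hM
    _ = _ := by ring

lemma setLIntegral_le_const_mul {α : Type*} [MeasurableSpace α] (μ : Measure α) {s : Set α}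
    (hs : MeasurableSet s) (c : ℝ≥0∞) (hc : c ≠ ⊤) {f h : α → ℝ≥0∞}
    (hfh : ∀ x ∈ s, f x ≤ c * h x) :
    ∫⁻ x in s, f x ∂μ ≤ c * ∫⁻ x in s, h x ∂μ :=
  (setLIntegral_mono' hs hfh).trans (le_of_eq (lintegral_const_mul' c h hc))

lemma lintegral_le_const_mul {α : Type*} [MeasurableSpace α] (μ : Measure α)
    (c : ℝ≥0∞) (hc : c ≠ ⊤) {f h : α → ℝ≥0∞} (hfh : ∀ x, f x ≤ c * h x) :
    ∫⁻ x, f x ∂μ ≤ c * ∫⁻ x, h x ∂μ :=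
  (lintegral_mono hfh).trans (le_of_eq (lintegral_const_mul' c h hc))

end AuxLemmas

/-- If the FSN density generator `p` is bounded above by `K`, then the
marginal likelihood of the FSN linear mixed model satisfies `m(y) ≤ K^q · m_N(y)`. -/


theorem fsn_marginal_le_pow_mul_normal_marginal
    {n p r : ℕ} {qs : Fin r → ℕ}
    (X : Matrix (Fin n) (Fin p) ℝ) (Z : Matrix (Fin n) ((i : Fin r) × Fin (qs i)) ℝ)
    (pdens : ℝ → ℝ → ℝ) (Λset : Set ℝ) (πs : Fin r → ℝ → ℝ)
    (a0 b0 : ℝ) (av bv : Fin r → ℝ)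
    (hnp : p < n) (hX : X.rank = p)
    -- `p(·|λ)` is a probability density on [0,1]
    (hpdens : ∀ lam ∈ Λset, (∀ w ∈ Set.Icc (0 : ℝ) 1, 0 ≤ pdens w lam) ∧
      ∫ w in Set.Icc (0 : ℝ) 1, pdens w lam = 1)
    (hπnonneg : ∀ i, ∀ lam ∈ Λset, 0 ≤ πs i lam)
    (hπproper : ∀ i, ∫ lam in Λset, πs i lam = 1)
    (hb0 : 0 ≤ b0) (hbv : ∀ i, 0 ≤ bv i)
    -- `p` is upper bounded by K
    (K : ℝ) (hK : 0 < K)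
    (hbdd : ∀ w ∈ Set.Icc (0 : ℝ) 1, ∀ lam ∈ Λset, pdens w lam ≤ K)
    (y : Fin n → ℝ) :
    fsnMarginal X Z pdens Λset πs a0 b0 av bv y ≤
      ENNReal.ofReal (K ^ (∑ i, qs i)) * normalMarginal X Z a0 b0 av bv y := by
  classical
  set S := {l : Fin r → ℝ | ∀ i, l i ∈ Λset} with hS
  set N := normalMarginal X Z a0 b0 av bv y with hNdef
  by_cases hNtop : N = ⊤
  · rw [hNtop, ENNReal.mul_top (ENNReal.ofReal_pos.mpr (pow_pos hK _)).ne']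
    exact le_top
  -- integrability and a.e. facts for the priors
  have hπint : ∀ i, Integrable (πs i) (volume.restrict Λset) := by
    intro i
    by_contra h
    have := hπproper i
    rw [integral_undef h] at this
    exact zero_ne_one this
  have hπae0 : ∀ i, 0 ≤ᵐ[volume.restrict Λset] πs i := fun i =>
    ae_nonneg_restrict_of_forall_mem (hπnonneg i) (hπint i).1
  set T := toMeasurable volume Λset with hTdef
  have hTm : MeasurableSet T := measurableSet_toMeasurable _ _
  have hrT : (volume : Measure ℝ).restrict T = volume.restrict Λset :=
    Measure.restrict_toMeasurable_of_sFinite _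
  set g : Fin r → ℝ → ℝ := fun i => (hπint i).1.mk (πs i) with hgdef
  have hgm : ∀ i, Measurable (g i) := fun i =>
    (hπint i).1.stronglyMeasurable_mk.measurable
  have hgae : ∀ i, πs i =ᵐ[volume.restrict Λset] g i := fun i => (hπint i).1.ae_eq_mk
  set D := ENNReal.ofReal (K ^ (∑ i, qs i)) * N with hDdef
  have hDne : D ≠ ⊤ := ENNReal.mul_ne_top ENNReal.ofReal_ne_top hNtop
  set gbig : (Fin r → ℝ) → ℝ≥0∞ :=
    fun lam => ENNReal.ofReal (∏ i, πs i (lam i)) * D with hgbig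
  set g' : (Fin r → ℝ) → ℝ≥0∞ :=
    fun lam => (∏ i, ENNReal.ofReal (g i (lam i))) * D with hg'def
  have hg'm : Measurable g' :=
    (Finset.measurable_prod Finset.univ fun i _ =>
      ENNReal.measurable_ofReal.comp ((hgm i).comp (measurable_pi_apply i))).mul_const D
  -- bad sets
  set Bad : Fin r → Set ℝ :=
    fun i => {x | ¬ (g i x = πs i x ∧ 0 ≤ πs i x)} with hBadDef
  have hBadNull : ∀ i, (volume.restrict Λset) (Bad i) = 0 := by
    intro i
    refine le_zero_iff.mp ?_
    have hsub : Bad i ⊆ {x | ¬ g i x = πs i x} ∪ {x | ¬ 0 ≤ πs i x} := by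
      intro x hx
      simp only [hBadDef, Set.mem_setOf_eq, not_and_or] at hx
      exact hx.imp (fun h => h) (fun h => h)
    calc (volume.restrict Λset) (Bad i)
        ≤ (volume.restrict Λset) ({x | ¬ g i x = πs i x} ∪ {x | ¬ 0 ≤ πs i x}) :=
          measure_mono hsub
      _ ≤ (volume.restrict Λset) {x | ¬ g i x = πs i x}
            + (volume.restrict Λset) {x | ¬ 0 ≤ πs i x} := measure_union_le _ _
      _ = 0 := by
          have h1 : (volume.restrict Λset) {x | ¬ g i x = πs i x} = 0 :=
            ae_iff.mp (hgae i).symm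
          have h2 : (volume.restrict Λset) {x | ¬ (0:ℝ) ≤ πs i x} = 0 := by
            simpa using ae_iff.mp (hπae0 i)
          rw [h1, h2, add_zero]
  set NN : Fin r → Set ℝ := fun i => toMeasurable (volume.restrict Λset) (Bad i) with hNNdef
  have hNNm : ∀ i, MeasurableSet (NN i) := fun i => measurableSet_toMeasurable _ _
  have hNNnull : ∀ i, (volume.restrict T) (NN i) = 0 := by
    intro i
    rw [hrT, hNNdef]
    rw [measure_toMeasurable]
    exact hBadNull i
  -- comparison of restricted measures
  have hSsub : S ⊆ Set.pi Set.univ fun _ => T := by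
    intro l hl
    rw [Set.mem_pi]
    exact fun i _ => subset_toMeasurable _ _ (hl i)
  have hSvol_le : (volume : Measure (Fin r → ℝ)).restrict S
      ≤ Measure.pi fun _ => (volume : Measure ℝ).restrict T := by
    calc (volume : Measure (Fin r → ℝ)).restrict S
        ≤ (volume : Measure (Fin r → ℝ)).restrict (Set.pi Set.univ fun _ => T) :=
          Measure.restrict_mono hSsub le_rfl
      _ = Measure.pi fun _ => (volume : Measure ℝ).restrict T :=
          restrict_pi_of_measurable T hTm
  have hPreNull : ∀ i, (volume : Measure (Fin r → ℝ)).restrict S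
      ((fun l : Fin r → ℝ => l i) ⁻¹' NN i) = 0 := by
    intro i
    refine le_zero_iff.mp ?_
    have hbox : (fun l : Fin r → ℝ => l i) ⁻¹' NN i
        = Set.pi Set.univ (fun j => if j = i then NN i else Set.univ) := by
      ext l
      simp only [Set.mem_preimage, Set.mem_pi, Set.mem_univ, true_implies]
      constructor
      · intro h j
        by_cases hj : j = i
        · subst hj; simp [h]
        · simp [hj]
      · intro h
        have := h i
        simpa using this
    calc (volume : Measure (Fin r → ℝ)).restrict S ((fun l : Fin r → ℝ => l i) ⁻¹' NN i)
        ≤ (Measure.pi fun _ => (volume : Measure ℝ).restrict T)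
            ((fun l : Fin r → ℝ => l i) ⁻¹' NN i) := hSvol_le _
      _ = ∏ j, (volume : Measure ℝ).restrict T (if j = i then NN i else Set.univ) := by
          rw [hbox, Measure.pi_pi]
      _ = 0 := Finset.prod_eq_zero (Finset.mem_univ i) (by rw [if_pos rfl]; exact hNNnull i)
  have hgg' : gbig =ᵐ[(volume : Measure (Fin r → ℝ)).restrict S] g' := by
    refine ae_iff.mpr (measure_mono_null ?_ (measure_iUnion_null hPreNull))
    intro lam hlam
    simp only [Set.mem_setOf_eq] at hlam
    rw [Set.mem_iUnion]
    by_contra hnot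
    push_neg at hnot
    apply hlam
    have hgood : ∀ i, g i (lam i) = πs i (lam i) ∧ 0 ≤ πs i (lam i) := by
      intro i
      have h1 : lam i ∉ NN i := hnot i
      have h2 : lam i ∉ Bad i := fun hb => h1 (subset_toMeasurable _ _ hb)
      simpa [hBadDef, not_not] using h2
    show ENNReal.ofReal (∏ i, πs i (lam i)) * D = (∏ i, ENNReal.ofReal (g i (lam i))) * D
    congr 1
    rw [ENNReal.ofReal_prod_of_nonneg (fun i _ => (hgood i).2)]
    exact Finset.prod_congr rfl fun i _ => by rw [(hgood i).1]
  -- the pointwise bound on the inner integrals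
  have hfg : ∀ lam ∈ S, (∫⁻ σ in {s : Fin r → ℝ | ∀ i, 0 < s i},
      ∫⁻ σ0 in Set.Ioi (0 : ℝ), ∫⁻ β : Fin p → ℝ, ∫⁻ u : ((i : Fin r) × Fin (qs i)) → ℝ,
        ENNReal.ofReal (
          (2 * Real.pi * σ0 ^ 2) ^ (-(n : ℝ) / 2) *
            Real.exp (-(∑ j, (y j - (X.mulVec β + Z.mulVec u) j) ^ 2) / (2 * σ0 ^ 2)) *
            (∏ ik : (i : Fin r) × Fin (qs i), fsnPDF pdens (σ ik.1) (lam ik.1) (u ik)) *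
            σ0 ^ (-(2 * a0 + 1)) * Real.exp (-b0 / σ0 ^ 2) *
            ∏ i, (πs i (lam i) * (σ i) ^ (-(2 * av i + 1)) *
              Real.exp (-(bv i) / (σ i) ^ 2)))) ≤ gbig lam := by
    intro lam hlam
    have hlam' : ∀ i, lam i ∈ Λset := hlam
    set c : ℝ≥0∞ := ENNReal.ofReal (K ^ (∑ i, qs i) * ∏ i, πs i (lam i)) with hc
    have hπprod : 0 ≤ ∏ i, πs i (lam i) :=
      Finset.prod_nonneg fun i _ => hπnonneg i _ (hlam' i)
    have hceq : c * N = gbig lam := by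
      rw [hc, ENNReal.ofReal_mul (pow_nonneg hK.le _), hgbig, hDdef]
      ring
    refine le_trans ?_ (le_of_eq hceq)
    rw [hNdef]
    unfold normalMarginal
    have hPmeas : MeasurableSet {s : Fin r → ℝ | ∀ i, 0 < s i} := by
      have : {s : Fin r → ℝ | ∀ i, 0 < s i} = ⋂ i, {s : Fin r → ℝ | 0 < s i} := by
        ext s; simp [Set.mem_iInter]
      rw [this]
      exact MeasurableSet.iInter fun i =>
        measurableSet_lt measurable_const (measurable_pi_apply i)
    refine setLIntegral_le_const_mul _ hPmeas c ENNReal.ofReal_ne_top fun σ hσ => ?_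
    have hσ' : ∀ i, 0 < σ i := hσ
    refine setLIntegral_le_const_mul _ measurableSet_Ioi c ENNReal.ofReal_ne_top fun σ0 hσ0 => ?_
    have hσ0' : (0:ℝ) < σ0 := hσ0
    refine lintegral_le_const_mul _ c ENNReal.ofReal_ne_top fun β => ?_
    refine lintegral_le_const_mul _ c ENNReal.ofReal_ne_top fun u => ?_
    rw [hc, ← ENNReal.ofReal_mul (mul_nonneg (pow_nonneg hK.le _) hπprod)]
    refine ENNReal.ofReal_le_ofReal ?_
    refine core_real_bound pdens Λset πs K (fun l hl => (hpdens l hl).1) hbdd hπnonneg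
      lam σ hlam' hσ' u _ _ _ _ ?_ ?_ ?_ ?_ _ _ ?_ ?_
    · exact Real.rpow_nonneg (by positivity) _
    · exact Real.exp_nonneg _
    · exact Real.rpow_nonneg hσ0'.le _
    · exact Real.exp_nonneg _
    · exact fun i => Real.rpow_nonneg (hσ' i).le _
    · exact fun i => Real.exp_nonneg _
  -- put everything together
  have hone : ∀ i, (∫⁻ t, ENNReal.ofReal (g i t) ∂(volume.restrict T)) = 1 := by
    intro i
    have h1 : (∫⁻ t, ENNReal.ofReal (g i t) ∂(volume.restrict T))
        = ∫⁻ t, ENNReal.ofReal (πs i t) ∂(volume.restrict Λset) := by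
      rw [hrT]
      exact lintegral_congr_ae ((hgae i).symm.mono fun x hx => by dsimp only; rw [hx])
    rw [h1, ← ofReal_integral_eq_lintegral_ofReal (hπint i) (hπae0 i)]
    have h2 := hπproper i
    rw [h2, ENNReal.ofReal_one]
  calc fsnMarginal X Z pdens Λset πs a0 b0 av bv y
      ≤ ∫⁻ lam in S, g' lam := by
        unfold fsnMarginal
        exact lintegral_le_of_forall_mem_le hfg hg'm hgg'
    _ ≤ ∫⁻ lam, g' lam ∂(Measure.pi fun _ => (volume : Measure ℝ).restrict T) :=
        lintegral_mono' hSvol_le le_rfl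
    _ = (∫⁻ lam, ∏ i, ENNReal.ofReal (g i (lam i))
          ∂(Measure.pi fun _ => (volume : Measure ℝ).restrict T)) * D :=
        lintegral_mul_const' D _ hDne
    _ = (∏ i, ∫⁻ t, ENNReal.ofReal (g i t) ∂(volume.restrict T)) * D := by
        rw [lintegral_pi_prod r (volume.restrict T) inferInstance
          (fun i t => ENNReal.ofReal (g i t))
          (fun i => ENNReal.measurable_ofReal.comp (hgm i))]
    _ = 1 * D := by rw [Finset.prod_eq_one fun i _ => hone i]
    _ = ENNReal.ofReal (K ^ (∑ i, qs i)) * normalMarginal X Z a0 b0 av bv y := by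
        rw [one_mul, hDdef, hNdef]
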